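/- arXiv:1605.02493 — 5 statements merged into one kernel-verified Lean document; each statement's English description precedes it below -/
import Mathlib

section
/- Let n ≥ 2, N ≤ 1, κ ∈ ℝ, and let f, h : (0, T) → ℝ be smooth functions with F(t) := e^{f(t)/(n-1)}. Suppose that for all s ∈ (0, T): 0 ≥ κ + ((1-N)·f'(s)²)/((n-1)(n-N)) + h(s)²/(n-1) - (2·h(s)·f'(s)/(n-1) + h'(s)). Then the function s ↦ F(s)²·h(s) - κ·∫₀ˢ F(u)² du is monotone nondecreasing on (0, T). -/
open Real Set intervalIntegral

theorem stmt3 (n : ℝ) (hn : 2 ≤ n) (N : ℝ) (hN : N ≤ 1) (κ T : ℝ)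
    (f h : ℝ → ℝ) (hf : ContDiff ℝ (⊤ : ℕ∞) f)
    (hh : ∀ s ∈ Ioo (0 : ℝ) T, DifferentiableAt ℝ h s)
    (F : ℝ → ℝ) (hF : ∀ t, F t = Real.exp (f t / (n - 1)))
    (hineq : ∀ s ∈ Ioo (0 : ℝ) T,
      0 ≥ κ + (1 - N) * (deriv f s) ^ 2 / ((n - 1) * (n - N))
        + (h s) ^ 2 / (n - 1)
        - (2 * h s * deriv f s / (n - 1) + deriv h s)) :
    MonotoneOn (fun s => (F s) ^ 2 * h s - κ * ∫ u in (0 : ℝ)..s, (F u) ^ 2)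
      (Ioo (0 : ℝ) T) := by
  have hn1 : (0:ℝ) < n - 1 := by linarith
  have hnN : (0:ℝ) < n - N := by linarith
  have hFeq : F = fun t => Real.exp (f t / (n - 1)) := funext hF
  have hFcont : Continuous F := by
    rw [hFeq]; exact Real.continuous_exp.comp (hf.continuous.div_const (n-1))
  have hF2c : Continuous fun u => (F u)^2 := hFcont.pow 2
  have hder : ∀ s ∈ Ioo (0:ℝ) T,
      HasDerivAt (fun s => (F s) ^ 2 * h s - κ * ∫ u in (0 : ℝ)..s, (F u) ^ 2)
        ((F s)^2 * (2 * h s * deriv f s / (n-1) + deriv h s - κ)) s := by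
    intro s hs
    have hfd : HasDerivAt f (deriv f s) s := (hf.differentiable (by simp) s).hasDerivAt
    have hFd : HasDerivAt F (F s * (deriv f s / (n-1))) s := by
      have : HasDerivAt (fun t => Real.exp (f t / (n-1)))
          (Real.exp (f s/(n-1)) * (deriv f s/(n-1))) s := (hfd.div_const (n-1)).exp
      rw [hFeq]; simpa [hF s] using this
    have hF2 : HasDerivAt (fun t => (F t)^2)
        ((2:ℕ) * F s ^ 1 * (F s * (deriv f s/(n-1)))) s := hFd.pow 2
    have hhd : HasDerivAt h (deriv h s) s := (hh s hs).hasDerivAt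
    have hI : HasDerivAt (fun s => ∫ u in (0:ℝ)..s, (F u)^2) ((F s)^2) s :=
      intervalIntegral.integral_hasDerivAt_right (hF2c.intervalIntegrable 0 s)
        (hF2c.stronglyMeasurable.stronglyMeasurableAtFilter) hF2c.continuousAt
    have := (hF2.mul hhd).sub (hI.const_mul κ)
    refine this.congr_deriv ?_
    push_cast
    ring
  apply monotoneOn_of_deriv_nonneg (convex_Ioo 0 T)
  · intro s hs
    exact ((hder s hs).differentiableAt.continuousAt).continuousWithinAt
  · intro s hs
    rw [interior_Ioo] at hs
    exact (hder s hs).differentiableAt.differentiableWithinAt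
  · intro s hs
    rw [interior_Ioo] at hs
    rw [(hder s hs).deriv]
    have h1 := hineq s hs
    have hA : 0 ≤ (1 - N) * (deriv f s) ^ 2 / ((n - 1) * (n - N)) :=
      div_nonneg (mul_nonneg (by linarith) (sq_nonneg _)) (by positivity)
    have hB : 0 ≤ (h s) ^ 2 / (n - 1) := by positivity
    have : 0 ≤ 2 * h s * deriv f s / (n-1) + deriv h s - κ := by linarith
    positivity
end

section
/- Let V be a real inner product space, p ∈ (1, ∞), let X, Y ∈ V, and let a, b > 0 be real numbers. Then ‖X‖^p ≥ p·(b/a)^{p-1}·‖Y‖^{p-2}·⟨X, Y⟩ - (p-1)·(b/a)^p·‖Y‖^p (where for Y = 0 and p < 2 the term ‖Y‖^{p-2}⟨X,Y⟩ is interpreted as 0). Moreover, equality holds if and only if X = (b/a)·Y. -/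
open Real
open scoped RealInnerProductSpace

/-- scalar Picone: for `s u ≥ 0`, `p > 1`: `p u^{p-1} s - (p-1) u^p ≤ s^p`, eq iff `s = u`. -/
lemma scalar_picone {p s u : ℝ} (hp : 1 < p) (hs : 0 ≤ s) (hu : 0 ≤ u) :
    p * u ^ (p - 1) * s - (p - 1) * u ^ p ≤ s ^ p ∧
      (p * u ^ (p - 1) * s - (p - 1) * u ^ p = s ^ p ↔ s = u) := by
  rcases eq_or_lt_of_le hu with hu0 | hu0
  · subst hu0
    rw [Real.zero_rpow (by linarith : p - 1 ≠ 0), Real.zero_rpow (by linarith : p ≠ 0)]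
    refine ⟨by simpa using Real.rpow_nonneg hs p, ?_⟩
    rw [mul_zero, zero_mul, mul_zero, sub_zero]
    constructor
    · intro h
      exact ((Real.rpow_eq_zero_iff_of_nonneg hs (y := p)).mp h.symm).1
    · rintro rfl
      exact (Real.zero_rpow (by linarith : p ≠ 0)).symm
  · -- u > 0
    have hune : u ≠ 0 := ne_of_gt hu0
    have key : ∀ _ : s ≠ u, p * u ^ (p - 1) * s - (p - 1) * u ^ p < s ^ p := by
      intro hne
      have h1 : -1 ≤ s / u - 1 := by
        have : 0 ≤ s / u := div_nonneg hs hu0.le; linarith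
      have h2 : s / u - 1 ≠ 0 := by
        intro h; apply hne
        field_simp at h; linarith
      have hb := one_add_mul_self_lt_rpow_one_add h1 h2 hp
      have hsu : 1 + (s / u - 1) = s / u := by ring
      rw [hsu] at hb
      have hup : (0:ℝ) < u ^ p := Real.rpow_pos_of_pos hu0 p
      have := mul_lt_mul_of_pos_left hb hup
      rw [Real.div_rpow hs hu0.le] at this
      have hd : u ^ p * (s ^ p / u ^ p) = s ^ p := by field_simp
      rw [hd] at this
      have hum : u ^ p / u = u ^ (p - 1) := (Real.rpow_sub_one hune p).symm
      calc p * u ^ (p - 1) * s - (p - 1) * u ^ p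
          = u ^ p * (1 + p * (s / u - 1)) := by
            rw [← hum]; field_simp; ring
        _ < s ^ p := this
    constructor
    · rcases eq_or_ne s u with rfl | hne
      · exact le_of_eq (by rw [Real.rpow_sub_one hune p]; field_simp; ring)
      · exact (key hne).le
    · constructor
      · intro h
        by_contra hne
        exact absurd h (ne_of_lt (key hne))
      · rintro rfl
        rw [Real.rpow_sub_one hune p]; field_simp; ring

theorem stmt12 {V : Type*} [NormedAddCommGroup V] [InnerProductSpace ℝ V]
    (p : ℝ) (hp : 1 < p) (X Y : V) (a b : ℝ) (ha : 0 < a) (hb : 0 < b) :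
    ‖X‖ ^ p ≥ p * (b / a) ^ (p - 1) * ‖Y‖ ^ (p - 2) * ⟪X, Y⟫
        - (p - 1) * (b / a) ^ p * ‖Y‖ ^ p ∧
    (‖X‖ ^ p = p * (b / a) ^ (p - 1) * ‖Y‖ ^ (p - 2) * ⟪X, Y⟫
        - (p - 1) * (b / a) ^ p * ‖Y‖ ^ p ↔ X = (b / a) • Y) := by
  set t := b / a with ht
  have htpos : 0 < t := div_pos hb ha
  -- step A : ‖Y‖^(p-2) * ⟪X,Y⟫ ≤ ‖Y‖^(p-1) * ‖X‖
  have hA : ‖Y‖ ^ (p - 2) * ⟪X, Y⟫ ≤ ‖Y‖ ^ (p - 1) * ‖X‖ := by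
    rcases eq_or_ne Y 0 with rfl | hY
    · simp [Real.zero_rpow (by linarith : p - 1 ≠ 0)]
    · have hYpos : 0 < ‖Y‖ := norm_pos_iff.mpr hY
      have hinner := real_inner_le_norm X Y
      calc ‖Y‖ ^ (p - 2) * ⟪X, Y⟫ ≤ ‖Y‖ ^ (p - 2) * (‖X‖ * ‖Y‖) :=
            mul_le_mul_of_nonneg_left hinner (Real.rpow_nonneg hYpos.le _)
        _ = ‖Y‖ ^ (p - 1) * ‖X‖ := by
            rw [show p - 1 = (p - 2) + 1 by ring, Real.rpow_add_one (ne_of_gt hYpos)]; ring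
  -- middle quantity
  have hmid := scalar_picone hp (norm_nonneg X) (mul_nonneg htpos.le (norm_nonneg Y)) (p := p)
  have htY1 : (t * ‖Y‖) ^ (p - 1) = t ^ (p - 1) * ‖Y‖ ^ (p - 1) :=
    Real.mul_rpow htpos.le (norm_nonneg Y)
  have htYp : (t * ‖Y‖) ^ p = t ^ p * ‖Y‖ ^ p := Real.mul_rpow htpos.le (norm_nonneg Y)
  have hchain : p * t ^ (p - 1) * ‖Y‖ ^ (p - 2) * ⟪X, Y⟫ - (p - 1) * t ^ p * ‖Y‖ ^ p ≤
      p * (t * ‖Y‖) ^ (p - 1) * ‖X‖ - (p - 1) * (t * ‖Y‖) ^ p := by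
    rw [htY1, htYp]
    have hc : (0:ℝ) ≤ p * t ^ (p - 1) :=
      mul_nonneg (by linarith) (Real.rpow_nonneg htpos.le (p - 1))
    have h := mul_le_mul_of_nonneg_left hA hc
    nlinarith [h]
  have hineq : p * t ^ (p - 1) * ‖Y‖ ^ (p - 2) * ⟪X, Y⟫ - (p - 1) * t ^ p * ‖Y‖ ^ p ≤
      ‖X‖ ^ p := hchain.trans hmid.1
  refine ⟨hineq, ?_, ?_⟩
  · -- equality → X = t • Y
    intro heq
    have hmideq : p * (t * ‖Y‖) ^ (p - 1) * ‖X‖ - (p - 1) * (t * ‖Y‖) ^ p = ‖X‖ ^ p :=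
      le_antisymm hmid.1 (by linarith [hchain])
    have hXeq : ‖X‖ = t * ‖Y‖ := hmid.2.mp hmideq
    have hAeq : ‖Y‖ ^ (p - 2) * ⟪X, Y⟫ = ‖Y‖ ^ (p - 1) * ‖X‖ := by
      by_contra hne
      have hlt := lt_of_le_of_ne hA hne
      have hc : (0:ℝ) < p * t ^ (p - 1) :=
        mul_pos (by linarith) (Real.rpow_pos_of_pos htpos _)
      have := mul_lt_mul_of_pos_left hlt hc
      rw [htY1, htYp] at hmideq
      nlinarith [this]
    rcases eq_or_ne Y 0 with rfl | hY
    · have : ‖X‖ = 0 := by simpa using hXeq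
      simp [norm_eq_zero.mp this]
    · have hYpos : 0 < ‖Y‖ := norm_pos_iff.mpr hY
      have hp2 : (0:ℝ) < ‖Y‖ ^ (p - 2) := Real.rpow_pos_of_pos hYpos _
      have hinner : ⟪X, Y⟫ = ‖X‖ * ‖Y‖ := by
        have : ‖Y‖ ^ (p - 1) = ‖Y‖ ^ (p - 2) * ‖Y‖ := by
          rw [show p - 1 = (p - 2) + 1 by ring, Real.rpow_add_one (ne_of_gt hYpos)]
        rw [this] at hAeq
        have := mul_left_cancel₀ (ne_of_gt hp2) (by linarith [hAeq] : ‖Y‖ ^ (p - 2) * ⟪X, Y⟫ = ‖Y‖ ^ (p - 2) * (‖X‖ * ‖Y‖))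
        linarith [this]
      have hsm := inner_eq_norm_mul_iff_real.mp hinner
      rw [hXeq] at hsm
      have : ‖Y‖ • X = ‖Y‖ • (t • Y) := by
        rw [hsm, smul_smul, mul_comm]
      exact smul_right_injective V (ne_of_gt hYpos) this
  · -- X = t • Y → equality
    rintro rfl
    have hnX : ‖t • Y‖ = t * ‖Y‖ := by
      rw [norm_smul, Real.norm_of_nonneg htpos.le]
    have hinner : ⟪t • Y, Y⟫ = t * (‖Y‖ * ‖Y‖) := by
      rw [real_inner_smul_left, real_inner_self_eq_norm_mul_norm]
    rw [hnX, hinner]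
    rcases eq_or_ne Y 0 with rfl | hY
    · simp [Real.zero_rpow (by linarith : p ≠ 0),
        Real.mul_rpow htpos.le (le_refl (0:ℝ)),
        Real.zero_rpow (by linarith : p - 1 ≠ 0)]
    · have hYpos : 0 < ‖Y‖ := norm_pos_iff.mpr hY
      rw [Real.mul_rpow htpos.le hYpos.le]
      have h1 : ‖Y‖ ^ (p - 2) * (‖Y‖ * ‖Y‖) = ‖Y‖ ^ p := by
        rw [show p = (p - 2) + 1 + 1 by ring, Real.rpow_add_one (ne_of_gt hYpos),
          Real.rpow_add_one (by positivity)]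
        ring
      have h2 : t ^ (p - 1) * t = t ^ p := by
        rw [← Real.rpow_add_one (ne_of_gt htpos) (p - 1)]; norm_num
      linear_combination (-(p * t ^ (p - 1) * t)) * h1 - p * ‖Y‖ ^ p * h2
end

section
/- Let p ∈ (1, ∞), let U ⊆ ℝⁿ be open, and let φ, ψ : U → ℝ be differentiable with φ > 0 and ψ ≥ 0 on U. Then pointwise on U: ‖∇ψ‖^p ≥ ‖∇φ‖^{p-2} · ⟨∇(ψ^p · φ^{1-p}), ∇φ⟩. -/
/-!
By the product and chain rules, with `r = ψ / φ`,
`∇(ψ^p φ^{1-p}) = p r^{p-1} ∇ψ + (1-p) r^p ∇φ`. Pairing with `‖∇φ‖^{p-2} ∇φ` and bounding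
`⟪∇ψ, ∇φ⟫` by Cauchy–Schwarz, the claim reduces to the scalar inequality
`p a b^{p-1} ≤ a^p + (p-1) b^p` for `a = ‖∇ψ‖`, `b = r ‖∇φ‖`, which is Young's inequality with
exponents `p` and `p / (p - 1)`.
-/

open Real
open scoped RealInnerProductSpace

theorem Real.mul_mul_rpow_sub_one_le {a b p : ℝ} (ha : 0 ≤ a) (hb : 0 ≤ b) (hp : 1 < p) :
    p * a * b ^ (p - 1) ≤ a ^ p + (p - 1) * b ^ p := by
  have hpq : p.HolderConjugate (p / (p - 1)) := .conjExponent hp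
  have hyoung := young_inequality_of_nonneg ha (rpow_nonneg hb (p - 1)) hpq
  rw [← rpow_mul hb, hpq.sub_one_mul_conj] at hyoung
  have hp0 : 0 < p := by linarith
  have hp1 : 0 < p - 1 := by linarith
  calc p * a * b ^ (p - 1) = p * (a * b ^ (p - 1)) := by ring
    _ ≤ p * (a ^ p / p + b ^ p / (p / (p - 1))) := by gcongr
    _ = a ^ p + (p - 1) * b ^ p := by field_simp

section
variable {E : Type*} [NormedAddCommGroup E] [InnerProductSpace ℝ E]

theorem norm_rpow_sub_two_mul_inner_le {p r : ℝ} (hp : 1 < p) (hr : 0 ≤ r) (u v : E) :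
    ‖v‖ ^ (p - 2) * ⟪(p * r ^ (p - 1)) • u + ((1 - p) * r ^ p) • v, v⟫ ≤ ‖u‖ ^ p := by
  rcases eq_or_ne v 0 with rfl | hv
  · simpa using rpow_nonneg (norm_nonneg u) p
  have hB : 0 < ‖v‖ := norm_pos_iff.mpr hv
  have hvv : ⟪v, v⟫ = ‖v‖ ^ (2 : ℝ) := by
    rw [real_inner_self_eq_norm_sq, rpow_two]
  have hB2 : ‖v‖ ^ (p - 2) * ‖v‖ ^ (2 : ℝ) = ‖v‖ ^ p := by
    rw [← rpow_add hB]; ring_nf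
  have hB1 : ‖v‖ ^ (p - 2) * ‖v‖ = ‖v‖ ^ (p - 1) := by
    rw [← rpow_add_one hB.ne']; ring_nf
  have hcs : ‖v‖ ^ (p - 2) * ⟪u, v⟫ ≤ ‖u‖ * ‖v‖ ^ (p - 1) := by
    rw [← hB1, mul_left_comm]
    exact mul_le_mul_of_nonneg_left (real_inner_le_norm u v) (rpow_nonneg hB.le _)
  calc ‖v‖ ^ (p - 2) * ⟪(p * r ^ (p - 1)) • u + ((1 - p) * r ^ p) • v, v⟫
      = p * r ^ (p - 1) * (‖v‖ ^ (p - 2) * ⟪u, v⟫) - (p - 1) * r ^ p * ‖v‖ ^ p := by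
        rw [inner_add_left, real_inner_smul_left, real_inner_smul_left, hvv, ← hB2]; ring
    _ ≤ p * r ^ (p - 1) * (‖u‖ * ‖v‖ ^ (p - 1)) - (p - 1) * r ^ p * ‖v‖ ^ p := by
        gcongr
    _ = p * ‖u‖ * (r * ‖v‖) ^ (p - 1) - (p - 1) * (r * ‖v‖) ^ p := by
        rw [mul_rpow hr hB.le, mul_rpow hr hB.le]; ring
    _ ≤ ‖u‖ ^ p := by
        linarith [mul_mul_rpow_sub_one_le (norm_nonneg u) (mul_nonneg hr hB.le) hp]

theorem HasGradientAt.rpow_mul_rpow_one_sub [CompleteSpace E] {ψ φ : E → ℝ} {gψ gφ x : E}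
    {p : ℝ} (hp : 1 ≤ p) (hψ : HasGradientAt ψ gψ x) (hφ : HasGradientAt φ gφ x)
    (hψ0 : 0 ≤ ψ x) (hφ0 : 0 < φ x) :
    HasGradientAt (fun y => ψ y ^ p * φ y ^ (1 - p))
      ((p * (ψ x / φ x) ^ (p - 1)) • gψ + ((1 - p) * (ψ x / φ x) ^ p) • gφ) x := by
  have hψp := hψ.hasFDerivAt.rpow_const (p := p) (Or.inr hp)
  have hφp := hφ.hasFDerivAt.rpow_const (p := 1 - p) (Or.inl hφ0.ne')
  have hdiv : ∀ q : ℝ, (ψ x / φ x) ^ q = ψ x ^ q * φ x ^ (-q) := fun q => by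
    rw [div_rpow hψ0 hφ0.le, rpow_neg hφ0.le, div_eq_mul_inv]
  rw [hasGradientAt_iff_hasFDerivAt]
  refine (hψp.mul hφp).congr_fderiv ?_
  rw [map_add, map_smul, map_smul, hdiv, hdiv, smul_smul, smul_smul, add_comm]
  congr 2 <;> ring_nf
end

theorem stmt13_general (n : ℕ) (p : ℝ) (hp : 1 < p)
    (U : Set (EuclideanSpace ℝ (Fin n)))
    (φ ψ : EuclideanSpace ℝ (Fin n) → ℝ)
    (hφ_diff : ∀ x ∈ U, DifferentiableAt ℝ φ x)
    (hψ_diff : ∀ x ∈ U, DifferentiableAt ℝ ψ x)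
    (hφ_pos : ∀ x ∈ U, 0 < φ x) (hψ_nonneg : ∀ x ∈ U, 0 ≤ ψ x) :
    ∀ x ∈ U,
      ‖gradient ψ x‖ ^ p ≥ ‖gradient φ x‖ ^ (p - 2) *
        ⟪gradient (fun y => ψ y ^ p * φ y ^ (1 - p)) x, gradient φ x⟫ := by
  intro x hx
  have hgrad := (hψ_diff x hx).hasGradientAt.rpow_mul_rpow_one_sub hp.le
    (hφ_diff x hx).hasGradientAt (hψ_nonneg x hx) (hφ_pos x hx)
  rw [hgrad.gradient]
  exact norm_rpow_sub_two_mul_inner_le hp (div_nonneg (hψ_nonneg x hx) (hφ_pos x hx).le) _ _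

theorem stmt13 (n : ℕ) (p : ℝ) (hp : 1 < p)
    (U : Set (EuclideanSpace ℝ (Fin n))) (hU : IsOpen U)
    (φ ψ : EuclideanSpace ℝ (Fin n) → ℝ)
    (hφ_diff : ∀ x ∈ U, DifferentiableAt ℝ φ x)
    (hψ_diff : ∀ x ∈ U, DifferentiableAt ℝ ψ x)
    (hφ_pos : ∀ x ∈ U, 0 < φ x) (hψ_nonneg : ∀ x ∈ U, 0 ≤ ψ x) :
    ∀ x ∈ U,
      ‖gradient ψ x‖ ^ p ≥ ‖gradient φ x‖ ^ (p - 2) *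
        ⟪gradient (fun y => ψ y ^ p * φ y ^ (1 - p)) x, gradient φ x⟫ :=
  stmt13_general n p hp U φ ψ hφ_diff hψ_diff hφ_pos hψ_nonneg
end

section
/- Let θ : [0, R] → (0, ∞) be a continuous nonincreasing function such that r·∫ᵣᴿ θ(t) dt = (R - r)·∫₀ʳ θ(s) ds for every r ∈ (0, R). Then θ is constant on [0, R]. -/
open Real Set intervalIntegral

theorem stmt14 (R : ℝ) (hR : 0 < R) (θ : ℝ → ℝ)
    (hθ_cont : ContinuousOn θ (Icc (0 : ℝ) R))
    (hθ_pos : ∀ t ∈ Icc (0 : ℝ) R, 0 < θ t)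
    (hθ_anti : AntitoneOn θ (Icc (0 : ℝ) R))
    (heq : ∀ r ∈ Ioo (0 : ℝ) R,
      r * (∫ t in r..R, θ t) = (R - r) * ∫ s in (0 : ℝ)..r, θ s) :
    ∀ s ∈ Icc (0 : ℝ) R, ∀ t ∈ Icc (0 : ℝ) R, θ s = θ t := by
  set C := ∫ t in (0:ℝ)..R, θ t with hCdef
  have h0mem : (0:ℝ) ∈ Icc (0:ℝ) R := ⟨le_rfl, hR.le⟩
  have hRmem : R ∈ Icc (0:ℝ) R := ⟨hR.le, le_rfl⟩
  have hint : ∀ a b, a ∈ Icc (0:ℝ) R → b ∈ Icc (0:ℝ) R →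
      IntervalIntegrable θ MeasureTheory.volume a b := fun a b ha hb =>
    (hθ_cont.mono (uIcc_subset_Icc ha hb)).intervalIntegrable
  have key : ∀ r ∈ Ioo (0:ℝ) R, (∫ s in (0:ℝ)..r, θ s) = r * (C / R) := by
    intro r hr
    have hr' : r ∈ Icc (0:ℝ) R := Ioo_subset_Icc_self hr
    have hadd : (∫ s in (0:ℝ)..r, θ s) + (∫ t in r..R, θ t) = C :=
      intervalIntegral.integral_add_adjacent_intervals (hint 0 r h0mem hr')
        (hint r R hr' hRmem)
    have h := heq r hr
    field_simp
    linear_combination (-1 : ℝ) * h + r * hadd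
  have hconst : ∀ r ∈ Ioo (0:ℝ) R, θ r = C / R := by
    intro r hr
    have hca : ContinuousAt θ r := hθ_cont.continuousAt (Icc_mem_nhds hr.1 hr.2)
    have hmeas : StronglyMeasurableAtFilter θ (nhds r) MeasureTheory.volume :=
      ⟨Ioo (0:ℝ) R, Ioo_mem_nhds hr.1 hr.2,
        ((hθ_cont.mono Ioo_subset_Icc_self).aemeasurable measurableSet_Ioo).aestronglyMeasurable⟩
    have hF : HasDerivAt (fun u => ∫ s in (0:ℝ)..u, θ s) (θ r) r :=
      intervalIntegral.integral_hasDerivAt_right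
        (hint 0 r h0mem (Ioo_subset_Icc_self hr)) hmeas hca
    have hlin : HasDerivAt (fun u : ℝ => u * (C / R)) (C / R) r := by
      simpa using (hasDerivAt_id r).mul_const (C / R)
    have hev : (fun u => ∫ s in (0:ℝ)..u, θ s) =ᶠ[nhds r] (fun u : ℝ => u * (C / R)) :=
      Filter.eventuallyEq_of_mem (Ioo_mem_nhds hr.1 hr.2) key
    have hF' : HasDerivAt (fun u => ∫ s in (0:ℝ)..u, θ s) (C / R) r :=
      hlin.congr_of_eventuallyEq hev
    exact hF.unique hF'
  have hNB0 : (nhdsWithin (0:ℝ) (Ioo (0:ℝ) R)).NeBot := by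
    rw [← mem_closure_iff_nhdsWithin_neBot, closure_Ioo hR.ne]
    exact ⟨le_rfl, hR.le⟩
  have hNBR : (nhdsWithin R (Ioo (0:ℝ) R)).NeBot := by
    rw [← mem_closure_iff_nhdsWithin_neBot, closure_Ioo hR.ne]
    exact ⟨hR.le, le_rfl⟩
  have hend : ∀ x ∈ Icc (0:ℝ) R, θ x = C / R := by
    intro x hx
    rcases eq_or_lt_of_le hx.1 with h0 | h0
    · have h1 : Filter.Tendsto θ (nhdsWithin (0:ℝ) (Ioo (0:ℝ) R)) (nhds (θ 0)) :=
        (hθ_cont 0 h0mem).mono_left (nhdsWithin_mono _ Ioo_subset_Icc_self)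
      have h2 : Filter.Tendsto θ (nhdsWithin (0:ℝ) (Ioo (0:ℝ) R)) (nhds (C / R)) :=
        tendsto_const_nhds.congr'
          (eventually_nhdsWithin_of_forall fun y hy => (hconst y hy).symm)
      rw [← h0]
      exact tendsto_nhds_unique h1 h2
    rcases eq_or_lt_of_le hx.2 with hRx | hRx
    · have h1 : Filter.Tendsto θ (nhdsWithin R (Ioo (0:ℝ) R)) (nhds (θ R)) :=
        (hθ_cont R hRmem).mono_left (nhdsWithin_mono _ Ioo_subset_Icc_self)
      have h2 : Filter.Tendsto θ (nhdsWithin R (Ioo (0:ℝ) R)) (nhds (C / R)) :=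
        tendsto_const_nhds.congr'
          (eventually_nhdsWithin_of_forall fun y hy => (hconst y hy).symm)
      rw [hRx]
      exact tendsto_nhds_unique h1 h2
    · exact hconst x ⟨h0, hRx⟩
  intro s hs t ht
  rw [hend s hs, hend t ht]
end

section
/- Let n ≥ 2 and let f : [0, T) → ℝ be smooth with F(t) := e^{(f(t)-f(0))/(n-1)}. Suppose h : (0, T) → ℝ is smooth, satisfies the Riccati inequality 0 ≥ h(s)²/(n-1) - F(s)^{-2}·(F²h)'(s) for all s ∈ (0,T) (the case κ = 0, N = 1), that lim_{s→0} F(s)²h(s) ≥ 0, and that h(t₀) = 0 for some t₀ ∈ (0, T). Then F²·h ≡ 0 on (0, t₀]; in particular h ≡ 0 on (0, t₀]. -/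
open Real Set Filter Topology

theorem stmt15 (n : ℝ) (hn : 2 ≤ n) (T : ℝ) (f h : ℝ → ℝ)
    (hf : ContDiff ℝ (⊤ : ℕ∞) f)
    (F : ℝ → ℝ) (hF : ∀ t, F t = Real.exp ((f t - f 0) / (n - 1)))
    (hh_diff : ∀ s ∈ Ioo (0 : ℝ) T, DifferentiableAt ℝ h s)
    (hRiccati : ∀ s ∈ Ioo (0 : ℝ) T,
      0 ≥ (h s) ^ 2 / (n - 1)
        - (F s) ^ (-2 : ℤ) * deriv (fun t => (F t) ^ 2 * h t) s)
    (L : ℝ) (hL : 0 ≤ L)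
    (hlim : Tendsto (fun s => (F s) ^ 2 * h s) (𝓝[>] (0 : ℝ)) (𝓝 L))
    (t₀ : ℝ) (ht₀ : t₀ ∈ Ioo (0 : ℝ) T) (hzero : h t₀ = 0) :
    ∀ t ∈ Ioc (0 : ℝ) t₀, (F t) ^ 2 * h t = 0 ∧ h t = 0 := by
  have hn1 : (0:ℝ) < n - 1 := by linarith
  have hFpos : ∀ t, 0 < F t := fun t => by rw [hF t]; exact Real.exp_pos _
  set g : ℝ → ℝ := fun t => (F t) ^ 2 * h t with hg
  have hFdiff : Differentiable ℝ F := by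
    have : Differentiable ℝ fun t => Real.exp ((f t - f 0) / (n - 1)) := by
      apply Differentiable.exp
      exact ((hf.differentiable (by simp)).sub_const _).div_const _
    exact fun x => (this x).congr_of_eventuallyEq (Filter.Eventually.of_forall fun t => (hF t))
  have hgdiff : ∀ s ∈ Ioo (0 : ℝ) T, DifferentiableAt ℝ g s := fun s hs =>
    ((hFdiff s).pow 2).mul (hh_diff s hs)
  have hderiv : ∀ s ∈ Ioo (0 : ℝ) T, 0 ≤ deriv g s := by
    intro s hs
    have hR := hRiccati s hs
    have hsq : 0 ≤ (h s) ^ 2 / (n - 1) := div_nonneg (sq_nonneg _) hn1.le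
    have h1 : 0 ≤ (F s) ^ (-2 : ℤ) * deriv g s := by
      simp only [hg] at hR ⊢; linarith
    have h2 : (0:ℝ) < (F s) ^ (-2 : ℤ) := zpow_pos (hFpos s) _
    nlinarith [h2, h1]
  have hmono : MonotoneOn g (Ioo (0:ℝ) T) := by
    apply monotoneOn_of_deriv_nonneg (convex_Ioo 0 T)
    · exact fun s hs => (hgdiff s hs).continuousAt.continuousWithinAt
    · intro s hs
      rw [interior_Ioo] at hs
      exact (hgdiff s hs).differentiableWithinAt
    · intro s hs
      rw [interior_Ioo] at hs
      exact hderiv s hs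
  intro t ht
  obtain ⟨ht0, htt0⟩ := ht
  have htIoo : t ∈ Ioo (0:ℝ) T := ⟨ht0, lt_of_le_of_lt htt0 ht₀.2⟩
  have hle : g t ≤ g t₀ := hmono htIoo ht₀ htt0
  have hgt0 : g t₀ = 0 := by simp [hg, hzero]
  have hLle : L ≤ g t := by
    apply le_of_tendsto hlim
    filter_upwards [Ioo_mem_nhdsGT_of_mem (left_mem_Ico.2 ht0)] with s hs
    exact hmono ⟨hs.1, hs.2.trans htIoo.2⟩ htIoo hs.2.le
  have hgt : g t = 0 := le_antisymm (hgt0 ▸ hle) (hL.trans hLle)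
  refine ⟨hgt, ?_⟩
  have hF2 : (F t) ^ 2 ≠ 0 := pow_ne_zero _ (hFpos t).ne'
  have h3 := hgt
  simp only [hg] at h3
  exact (mul_eq_zero.mp h3).resolve_left hF2
end
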